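/- arXiv:1811.00500 — 5 statements merged into one kernel-verified Lean document; each statement's English description precedes it below -/
import Mathlib

section
/- Let A be a complex unital *-algebra, B a unital star-subalgebra of A, and N, D unital star-subalgebras of A with N ⊆ D. Assume the products {bd : b ∈ B, d ∈ D} linearly span B∨D. Let E : D → A be a completely positive linear map with E(d*) = E(d)* for all d ∈ D, E(1) = 1, and E(D) ⊆ B' ∩ N. Let Ẽ : B∨D → A be a linear map satisfying Ẽ(bd) = bE(d) = Ẽ(db) for all b ∈ B, d ∈ D. Then Ẽ is a normalized Markov quasi-conditional expectation with respect to the triplet B ⊆ B∨(B'∩N) ⊆ B∨D; explicitly: (i) Ẽ(1) = 1; (ii) Ẽ(x*) = Ẽ(x)* for all x ∈ B∨D; (iii) Ẽ(bx) = bẼ(x) for all b ∈ B and x ∈ B∨D; (iv) the range of Ẽ is contained in B∨(B'∩N) and Ẽ(D) ⊆ B'∩N; (v) for every m ∈ ℕ, all a_1,…,a_m ∈ B∨(B'∩N) and all y_1,…,y_m ∈ B∨D, the element Σ_{i,j} a_i Ẽ(y_i y_j*) a_j* is positive in A. -/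
/-!
Every element of `B ∨ D` is a sum of products `b d`, and every element of `B ∨ (B' ∩ N)` a sum
of products `b p` with `p` commuting with `B`. On products, `Ẽ (b d b') = b E(d) b'`, because
`E(d)` commutes with `b'`; so all the algebraic properties of `Ẽ` reduce to those of `E` on `D`.
For positivity, `(b p) Ẽ((c d) (c' d')^*) (b' p')^* = w E(d d'^*) w'^*` with `w = b c p`, and the
double sum over the expanded families is positive by complete positivity of `E`.
-/

open Matrix

/-- An element of a `*`-algebra is *positive* if it is a finite sum of elements of the
form `star y * y`. -/
def IsPosElem {A : Type*} [Ring A] [StarRing A] (a : A) : Prop :=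
  a ∈ AddSubmonoid.closure {x : A | ∃ y : A, x = star y * y}

/-- A matrix over a `*`-algebra is *positive* if it is a finite sum of matrices of the
form `Cᴴ * C`. -/
def MatIsPos {A : Type*} [Ring A] [StarRing A] {k : ℕ}
    (X : Matrix (Fin k) (Fin k) A) : Prop :=
  X ∈ AddSubmonoid.closure
    {Y : Matrix (Fin k) (Fin k) A | ∃ C : Matrix (Fin k) (Fin k) A, Y = Cᴴ * C}

/-- The commutant of a subset `S` of an algebra. -/
def Commutant {A : Type*} [Mul A] (S : Set A) : Set A := {a : A | ∀ s ∈ S, a * s = s * a}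

open Pointwise Submodule

section Positivity

variable {A : Type*} [Ring A] [StarRing A]

theorem isPosElem_star_dotProduct_self {ι : Type*} [Fintype ι] (u : ι → A) :
    IsPosElem (star u ⬝ᵥ u) :=
  AddSubmonoid.sum_mem _ fun i _ => AddSubmonoid.subset_closure ⟨u i, rfl⟩

theorem MatIsPos.isPosElem_sum {k : ℕ} {M : Matrix (Fin k) (Fin k) A} (hM : MatIsPos M)
    (v : Fin k → A) : IsPosElem (∑ i, ∑ j, v i * M i j * star (v j)) := by
  have hform : ∀ X : Matrix (Fin k) (Fin k) A,
      ∑ i, ∑ j, v i * X i j * star (v j) = (v ᵥ* X) ⬝ᵥ star v := by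
    intro X
    simp only [dotProduct, vecMul, Finset.sum_mul]
    exact Finset.sum_comm
  rw [hform]
  induction hM using AddSubmonoid.closure_induction with
  | mem X hX =>
    obtain ⟨C, rfl⟩ := hX
    rw [← vecMul_vecMul, ← dotProduct_mulVec, ← star_star v, ← star_mulVec, star_star]
    exact isPosElem_star_dotProduct_self _
  | zero =>
    rw [vecMul_zero, zero_dotProduct]
    exact zero_mem _
  | add X Y _ _ hX hY =>
    rw [vecMul_add, add_dotProduct]
    exact add_mem hX hY

end Positivity

def IsCompletelyPositiveOn {A : Type*} [Ring A] [StarRing A] (E : A → A) (D : Set A) : Prop :=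
  ∀ (k : ℕ) (d : Fin k → A), (∀ i, d i ∈ D) →
    MatIsPos (Matrix.of fun i j => E (star (d i) * d j))

theorem IsCompletelyPositiveOn.isPosElem_sum {A : Type*} [Ring A] [StarRing A] {E : A → A}
    {D : Set A} (hE : IsCompletelyPositiveOn E D) {ι : Type*} [Fintype ι] (v d : ι → A)
    (hd : ∀ i, d i ∈ D) : IsPosElem (∑ i, ∑ j, v i * E (star (d i) * d j) * star (v j)) := by
  let e := (Fintype.equivFin ι).symm
  have := (hE _ (d ∘ e) fun i => hd (e i)).isPosElem_sum (v ∘ e)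
  rw [← e.sum_comp]
  simp_rw [← e.sum_comp (fun j => _ * E (_ * d j) * star (v j))]
  simpa only [Function.comp_apply, of_apply] using this

section Refinement

variable {A : Type*} [Ring A] [StarRing A] {ι : Type*} [Fintype ι] {κ : ι → Type*}
  [∀ i, Fintype (κ i)]

theorem sum_sigma_sum_sigma {M : Type*} [AddCommMonoid M]
    (f : (i : ι) → κ i → (j : ι) → κ j → M) :
    ∑ I : (i : ι) × κ i, ∑ J : (i : ι) × κ i, f I.1 I.2 J.1 J.2 =
      ∑ i, ∑ j, ∑ k, ∑ l, f i k j l := by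
  simp only [Fintype.sum_sigma]
  exact Finset.sum_congr rfl fun i _ => Finset.sum_comm

theorem sum_sum_mul_mul_star_sigma (v : (i : ι) → κ i → A) (K : ι → ι → A) :
    ∑ i, ∑ j, (∑ k, v i k) * K i j * star (∑ l, v j l) =
      ∑ I : (i : ι) × κ i, ∑ J : (i : ι) × κ i, v I.1 I.2 * K I.1 J.1 * star (v J.1 J.2) := by
  rw [sum_sigma_sum_sigma (fun i k j l => v i k * K i j * star (v j l))]
  simp only [star_sum, Finset.sum_mul, Finset.mul_sum]
  exact Finset.sum_congr rfl fun i _ => Finset.sum_congr rfl fun j _ => Finset.sum_comm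

theorem sum_sum_mul_map_mul_star_sigma {F : Type*} [FunLike F A A] [AddMonoidHomClass F A A]
    (f : F) (a : ι → A) (y : (i : ι) → κ i → A) :
    ∑ i, ∑ j, a i * f ((∑ k, y i k) * star (∑ l, y j l)) * star (a j) =
      ∑ I : (i : ι) × κ i, ∑ J : (i : ι) × κ i,
        a I.1 * f (y I.1 I.2 * star (y J.1 J.2)) * star (a J.1) := by
  rw [sum_sigma_sum_sigma (fun i k j l => a i * f (y i k * star (y j l)) * star (a j))]
  simp only [star_sum, map_sum, Finset.sum_mul, Finset.mul_sum]
  exact Finset.sum_congr rfl fun i _ => Finset.sum_congr rfl fun j _ => Finset.sum_comm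

end Refinement

theorem Submodule.exists_fin_sum_of_mem_span {R M : Type*} [Semiring R] [AddCommMonoid M]
    [Module R M] {s : Set M} (hs : ∀ (c : R), ∀ x ∈ s, c • x ∈ s) {x : M} (hx : x ∈ span R s) :
    ∃ (n : ℕ) (g : Fin n → M), (∀ k, g k ∈ s) ∧ ∑ k, g k = x := by
  obtain ⟨n, c, g, rfl⟩ := mem_span_set'.1 hx
  exact ⟨n, fun k => c k • (g k : M), fun k => hs _ _ (g k).2, rfl⟩

theorem Submodule.star_mem_span_of_forall_star_mem {R A : Type*} [CommSemiring R] [StarRing R]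
    [AddCommMonoid A] [StarAddMonoid A] [Module R A] [StarModule R A] {s : Set A}
    (hs : ∀ x ∈ s, star x ∈ s) {x : A} (hx : x ∈ span R s) : star x ∈ span R s := by
  induction hx using span_induction with
  | mem x hx => exact subset_span (hs x hx)
  | zero => simp
  | add x y _ _ hx hy => rw [star_add]; exact add_mem hx hy
  | smul c x _ hx => rw [star_smul]; exact smul_mem _ _ hx

section StarSubalgebra

variable {R A : Type*} [CommSemiring R] [StarRing R] [Semiring A] [Algebra R A] [StarRing A]
  [StarModule R A]

theorem StarSubalgebra.smul_mem_mul (S T : StarSubalgebra R A) (c : R) {x : A}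
    (hx : x ∈ (S : Set A) * (T : Set A)) : c • x ∈ (S : Set A) * (T : Set A) := by
  obtain ⟨s, hs, t, ht, rfl⟩ := hx
  exact ⟨c • s, SMulMemClass.smul_mem c hs, t, ht, smul_mul_assoc c s t⟩

theorem StarSubalgebra.coe_centralizer_inf (S N : StarSubalgebra R A) :
    ((StarSubalgebra.centralizer R (S : Set A) ⊓ N : StarSubalgebra R A) : Set A) =
      Commutant (S : Set A) ∩ N := by
  ext z
  simp only [SetLike.mem_coe, StarSubalgebra.mem_inf, StarSubalgebra.mem_centralizer_iff,
    Set.mem_inter_iff, Commutant]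
  refine and_congr_left' ⟨fun h s hs => (h s hs).1.symm, fun h s hs => ⟨(h s hs).symm, ?_⟩⟩
  exact (h _ (star_mem hs)).symm

theorem StarAlgebra.adjoin_union_subset_span_mul {S T : StarSubalgebra R A}
    (hST : ∀ t ∈ T, ∀ s ∈ S, Commute t s) :
    (StarAlgebra.adjoin R ((S : Set A) ∪ T) : Set A) ⊆ span R ((S : Set A) * (T : Set A)) := by
  have hmul : ((S : Set A) * (T : Set A)) * ((S : Set A) * (T : Set A)) ⊆
      (S : Set A) * (T : Set A) := by
    rintro _ ⟨_, ⟨s, hs, t, ht, rfl⟩, _, ⟨s', hs', t', ht', rfl⟩, rfl⟩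
    refine ⟨s * s', mul_mem hs hs', t * t', mul_mem ht ht', ?_⟩
    show s * s' * (t * t') = s * t * (s' * t')
    simp only [mul_assoc]
    rw [← mul_assoc t s', (hST t ht s' hs').eq, mul_assoc]
  intro x hx
  induction hx using StarAlgebra.adjoin_induction with
  | mem x hx =>
    refine subset_span ?_
    rcases hx with hx | hx
    · exact ⟨x, hx, 1, one_mem T, mul_one x⟩
    · exact ⟨1, one_mem S, x, hx, one_mul x⟩
  | algebraMap r =>
    exact subset_span ⟨algebraMap R A r, algebraMap_mem S r, 1, one_mem T, mul_one _⟩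
  | add x y _ _ hx hy => exact add_mem hx hy
  | mul x y _ _ hx hy =>
    have hxy := mul_mem_mul hx hy
    rw [span_mul_span] at hxy
    exact span_mono hmul hxy
  | star x _ hx =>
    refine star_mem_span_of_forall_star_mem ?_ hx
    rintro _ ⟨s, hs, t, ht, rfl⟩
    refine ⟨star s, star_mem hs, star t, star_mem ht, ?_⟩
    rw [star_mul, (hST _ (star_mem ht) _ (star_mem hs)).eq]

end StarSubalgebra

theorem mul_mul_mul_star_of_commute {A : Type*} [Semiring A] [StarRing A] {b p c x c' b' q : A}
    (hp : Commute p c) (hq : Commute q c') :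
    b * p * (c * x * star c') * star (b' * q) = b * c * p * x * star (b' * c' * q) := by
  simp only [star_mul]
  calc b * p * (c * x * star c') * (star q * star b')
      = b * (p * c) * x * (star c' * star q) * star b' := by noncomm_ring
    _ = b * (c * p) * x * (star q * star c') * star b' := by rw [hp.eq, hq.star_star.eq]
    _ = b * c * p * x * (star q * (star c' * star b')) := by noncomm_ring

def IsBalancedExtension {A : Type*} [Mul A] (Etil E : A → A) (B D : Set A) : Prop :=
  ∀ b ∈ B, ∀ d ∈ D, Etil (b * d) = b * E d ∧ Etil (d * b) = b * E d

namespace QuasiConditionalExpectation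

variable {A : Type*} [Ring A] [Algebra ℂ A] [StarRing A] [StarModule ℂ A]
  {B D : StarSubalgebra ℂ A} {E Etil : A →ₗ[ℂ] A}

theorem apply_eq_of_mem (hEtil : IsBalancedExtension Etil E B D)
    {d : A} (hd : d ∈ D) : Etil d = E d := by
  simpa using (hEtil 1 (one_mem B) d hd).1

theorem apply_mul_left_of_mem_span (hEtil : IsBalancedExtension Etil E B D)
    {b x : A} (hb : b ∈ B) (hx : x ∈ span ℂ ((B : Set A) * (D : Set A))) :
    Etil (b * x) = b * Etil x := by
  refine LinearMap.eqOn_span' (f := Etil ∘ₗ LinearMap.mulLeft ℂ b)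
    (g := LinearMap.mulLeft ℂ b ∘ₗ Etil) ?_ hx
  rintro _ ⟨b', hb', d, hd, rfl⟩
  simp only [LinearMap.comp_apply, LinearMap.mulLeft_apply, ← mul_assoc,
    (hEtil _ (mul_mem hb hb') d hd).1, (hEtil b' hb' d hd).1]

theorem apply_mul_mul (hEtil : IsBalancedExtension Etil E B D)
    (hspan : ((B ⊔ D : StarSubalgebra ℂ A) : Set A) ⊆ span ℂ ((B : Set A) * (D : Set A)))
    (hEB : ∀ d ∈ D, ∀ b ∈ B, Commute (E d) b) {b d b' : A} (hb : b ∈ B) (hd : d ∈ D)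
    (hb' : b' ∈ B) : Etil (b * d * b') = b * E d * b' := by
  have hdb' : d * b' ∈ span ℂ ((B : Set A) * (D : Set A)) :=
    hspan (mul_mem (le_sup_right (a := B) hd) (le_sup_left (b := D) hb'))
  rw [mul_assoc, apply_mul_left_of_mem_span hEtil hb hdb', (hEtil b' hb' d hd).2,
    ← (hEB d hd b' hb').eq, mul_assoc]

theorem apply_star_of_mem_span (hEtil : IsBalancedExtension Etil E B D)
    (hEstar : ∀ d ∈ D, E (star d) = star (E d)) (hEB : ∀ d ∈ D, ∀ b ∈ B, Commute (E d) b)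
    {x : A} (hx : x ∈ span ℂ ((B : Set A) * (D : Set A))) : Etil (star x) = star (Etil x) := by
  refine LinearMap.eqOn_span' (f := Etil.comp (starLinearEquiv ℂ (A := A)).toLinearMap)
    (g := (starLinearEquiv ℂ (A := A)).toLinearMap.comp Etil) ?_ hx
  rintro _ ⟨b, hb, d, hd, rfl⟩
  simp only [LinearMap.comp_apply, LinearEquiv.coe_coe, starLinearEquiv_apply, star_mul,
    (hEtil _ (star_mem hb) _ (star_mem hd)).2, (hEtil b hb d hd).1, ← hEstar d hd]
  exact (hEB _ (star_mem hd) _ (star_mem hb)).symm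

theorem apply_mem_adjoin
    (hEtil : IsBalancedExtension Etil E B D) {S : Set A}
    (hES : ∀ d ∈ D, E d ∈ S) {x : A} (hx : x ∈ span ℂ ((B : Set A) * (D : Set A))) :
    Etil x ∈ StarAlgebra.adjoin ℂ ((B : Set A) ∪ S) := by
  have hgen : (B : Set A) * (D : Set A) ⊆
      (StarAlgebra.adjoin ℂ ((B : Set A) ∪ S)).toSubalgebra.toSubmodule.comap Etil := by
    rintro _ ⟨b, hb, d, hd, rfl⟩
    simp only [SetLike.mem_coe, mem_comap, Subalgebra.mem_toSubmodule,
      StarSubalgebra.mem_toSubalgebra, (hEtil b hb d hd).1]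
    exact mul_mem (StarAlgebra.subset_adjoin ℂ _ (Or.inl hb))
      (StarAlgebra.subset_adjoin ℂ _ (Or.inr (hES d hd)))
  exact span_le.2 hgen hx

theorem isPosElem_sum_of_mem_mul
    (hEtil : IsBalancedExtension Etil E B D)
    (hspan : ((B ⊔ D : StarSubalgebra ℂ A) : Set A) ⊆ span ℂ ((B : Set A) * (D : Set A)))
    (hE : IsCompletelyPositiveOn E D) (hEB : ∀ d ∈ D, ∀ b ∈ B, Commute (E d) b)
    {P : StarSubalgebra ℂ A} (hP : ∀ p ∈ P, ∀ b ∈ B, Commute p b) {ι : Type*} [Fintype ι]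
    {a y : ι → A} (ha : ∀ i, a i ∈ (B : Set A) * (P : Set A))
    (hy : ∀ i, y i ∈ (B : Set A) * (D : Set A)) :
    IsPosElem (∑ i, ∑ j, a i * Etil (y i * star (y j)) * star (a j)) := by
  choose b hb p hp hbp using ha
  choose c hc d hd hcd using hy
  have hterm : ∀ i j, a i * Etil (y i * star (y j)) * star (a j) =
      b i * c i * p i * E (star (star (d i)) * star (d j)) * star (b j * c j * p j) := by
    intro i j
    rw [← hbp, ← hbp, ← hcd, ← hcd, star_star, star_mul (c j), ← mul_assoc, mul_assoc (c i),
      apply_mul_mul hEtil hspan hEB (hc i) (mul_mem (hd i) (star_mem (hd j))) (star_mem (hc j))]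
    exact mul_mul_mul_star_of_commute (hP _ (hp i) _ (hc i)) (hP _ (hp j) _ (hc j))
  simp only [hterm]
  exact hE.isPosElem_sum _ _ fun i => star_mem (hd i)

theorem isPosElem_sum_of_mem_span
    (hEtil : IsBalancedExtension Etil E B D)
    (hspan : ((B ⊔ D : StarSubalgebra ℂ A) : Set A) ⊆ span ℂ ((B : Set A) * (D : Set A)))
    (hE : IsCompletelyPositiveOn E D) (hEB : ∀ d ∈ D, ∀ b ∈ B, Commute (E d) b)
    {P : StarSubalgebra ℂ A} (hP : ∀ p ∈ P, ∀ b ∈ B, Commute p b) {ι : Type*} [Fintype ι]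
    {a y : ι → A} (ha : ∀ i, a i ∈ span ℂ ((B : Set A) * (P : Set A)))
    (hy : ∀ i, y i ∈ span ℂ ((B : Set A) * (D : Set A))) :
    IsPosElem (∑ i, ∑ j, a i * Etil (y i * star (y j)) * star (a j)) := by
  choose n a' ha' using fun i => exists_fin_sum_of_mem_span (B.smul_mem_mul P) (ha i)
  choose m y' hy' using fun i => exists_fin_sum_of_mem_span (B.smul_mem_mul D) (hy i)
  obtain rfl : a = fun i => ∑ k, a' i k := funext fun i => (ha' i).2.symm
  obtain rfl : y = fun i => ∑ k, y' i k := funext fun i => (hy' i).2.symm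
  rw [sum_sum_mul_mul_star_sigma]
  beta_reduce
  rw [sum_sum_mul_map_mul_star_sigma Etil (fun I : (i : ι) × Fin (n i) => a' I.1 I.2)
    (fun I => y' I.1)]
  exact isPosElem_sum_of_mem_mul hEtil hspan hE hEB hP (fun I => (ha' _).1 _) fun I => (hy' _).1 _

end QuasiConditionalExpectation

open QuasiConditionalExpectation

theorem stmt0_general {A : Type*} [Ring A] [Algebra ℂ A] [StarRing A] [StarModule ℂ A]
    (B N D : StarSubalgebra ℂ A)
    (hspan : ∀ x ∈ B ⊔ D,
      x ∈ Submodule.span ℂ {z : A | ∃ b ∈ B, ∃ d ∈ D, z = b * d})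
    (E : A →ₗ[ℂ] A)
    (hECP : ∀ (k : ℕ) (d : Fin k → A), (∀ i, d i ∈ D) →
      MatIsPos (Matrix.of fun i j => E (star (d i) * d j)))
    (hEstar : ∀ d ∈ D, E (star d) = star (E d))
    (hE1 : E 1 = 1)
    (hErange : ∀ d ∈ D, E d ∈ Commutant (B : Set A) ∩ (N : Set A))
    (Etil : A →ₗ[ℂ] A)
    (hEtil : ∀ b ∈ B, ∀ d ∈ D, Etil (b * d) = b * E d ∧ Etil (d * b) = b * E d) :
    -- (i) `Ẽ` is normalized
    Etil 1 = 1
    -- (ii) `Ẽ` is a `*`-map on `B ∨ D`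
    ∧ (∀ x ∈ B ⊔ D, Etil (star x) = star (Etil x))
    -- (iii) `Ẽ` is a `B`-module map
    ∧ (∀ b ∈ B, ∀ x ∈ B ⊔ D, Etil (b * x) = b * Etil x)
    -- (iv) range conditions: `Ẽ(B ∨ D) ⊆ B ∨ (B' ∩ N)` and `Ẽ(D) ⊆ B' ∩ N`
    ∧ (∀ x ∈ B ⊔ D,
        Etil x ∈ StarAlgebra.adjoin ℂ ((B : Set A) ∪ (Commutant (B : Set A) ∩ (N : Set A))))
    ∧ (∀ d ∈ D, Etil d ∈ Commutant (B : Set A) ∩ (N : Set A))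
    -- (v) complete positivity relative to `B ∨ (B' ∩ N)`
    ∧ (∀ (m : ℕ) (a y : Fin m → A),
        (∀ i, a i ∈
          StarAlgebra.adjoin ℂ ((B : Set A) ∪ (Commutant (B : Set A) ∩ (N : Set A)))) →
        (∀ i, y i ∈ B ⊔ D) →
        IsPosElem (∑ i, ∑ j, a i * Etil (y i * star (y j)) * star (a j))) := by
  have hBD : (B : Set A) * (D : Set A) = {z : A | ∃ b ∈ B, ∃ d ∈ D, z = b * d} := by
    ext z
    simp only [Set.mem_mul, SetLike.mem_coe, eq_comm, Set.mem_ofPred_eq]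
  have hspan' : ((B ⊔ D : StarSubalgebra ℂ A) : Set A) ⊆ span ℂ ((B : Set A) * (D : Set A)) :=
    hBD ▸ hspan
  have hEB : ∀ d ∈ D, ∀ b ∈ B, Commute (E d) b := fun d hd => (hErange d hd).1
  rw [← StarSubalgebra.coe_centralizer_inf] at hErange ⊢
  set P := StarSubalgebra.centralizer ℂ (B : Set A) ⊓ N
  have hP : ∀ p ∈ P, ∀ b ∈ B, Commute p b := fun p hp b hb =>
    ((StarSubalgebra.mem_centralizer_iff ℂ).1 (StarSubalgebra.mem_inf.1 hp).1 b hb).1.symm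
  refine ⟨by rw [apply_eq_of_mem hEtil (one_mem D), hE1],
    fun x hx => apply_star_of_mem_span hEtil hEstar hEB (hspan' hx),
    fun b hb x hx => apply_mul_left_of_mem_span hEtil hb (hspan' hx),
    fun x hx => apply_mem_adjoin hEtil hErange (hspan' hx),
    fun d hd => apply_eq_of_mem hEtil hd ▸ hErange d hd,
    fun m a y ha hy => ?_⟩
  exact isPosElem_sum_of_mem_span hEtil hspan' hECP hEB hP
    (fun i => StarAlgebra.adjoin_union_subset_span_mul hP (ha i)) fun i => hspan' (hy i)

/-- If `E : D → A` is a completely positive, star-preserving, unital map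
with range in `B' ∩ N` and `Ẽ : B ∨ D → A` is a linear map with `Ẽ(bd) = b E(d) = Ẽ(db)`,
then `Ẽ` is a normalized Markov quasi-conditional expectation with respect to the triplet
`B ⊆ B ∨ (B' ∩ N) ⊆ B ∨ D`. -/
theorem stmt0 {A : Type*} [Ring A] [Algebra ℂ A] [StarRing A] [StarModule ℂ A]
    (B N D : StarSubalgebra ℂ A) (hND : N ≤ D)
    (hspan : ∀ x ∈ B ⊔ D,
      x ∈ Submodule.span ℂ {z : A | ∃ b ∈ B, ∃ d ∈ D, z = b * d})
    (E : A →ₗ[ℂ] A)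
    (hECP : ∀ (k : ℕ) (d : Fin k → A), (∀ i, d i ∈ D) →
      MatIsPos (Matrix.of fun i j => E (star (d i) * d j)))
    (hEstar : ∀ d ∈ D, E (star d) = star (E d))
    (hE1 : E 1 = 1)
    (hErange : ∀ d ∈ D, E d ∈ Commutant (B : Set A) ∩ (N : Set A))
    (Etil : A →ₗ[ℂ] A)
    (hEtil : ∀ b ∈ B, ∀ d ∈ D, Etil (b * d) = b * E d ∧ Etil (d * b) = b * E d) :
    -- (i) `Ẽ` is normalized
    Etil 1 = 1
    -- (ii) `Ẽ` is a `*`-map on `B ∨ D`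
    ∧ (∀ x ∈ B ⊔ D, Etil (star x) = star (Etil x))
    -- (iii) `Ẽ` is a `B`-module map
    ∧ (∀ b ∈ B, ∀ x ∈ B ⊔ D, Etil (b * x) = b * Etil x)
    -- (iv) range conditions: `Ẽ(B ∨ D) ⊆ B ∨ (B' ∩ N)` and `Ẽ(D) ⊆ B' ∩ N`
    ∧ (∀ x ∈ B ⊔ D,
        Etil x ∈ StarAlgebra.adjoin ℂ ((B : Set A) ∪ (Commutant (B : Set A) ∩ (N : Set A))))
    ∧ (∀ d ∈ D, Etil d ∈ Commutant (B : Set A) ∩ (N : Set A))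
    -- (v) complete positivity relative to `B ∨ (B' ∩ N)`
    ∧ (∀ (m : ℕ) (a y : Fin m → A),
        (∀ i, a i ∈
          StarAlgebra.adjoin ℂ ((B : Set A) ∪ (Commutant (B : Set A) ∩ (N : Set A)))) →
        (∀ i, y i ∈ B ⊔ D) →
        IsPosElem (∑ i, ∑ j, a i * Etil (y i * star (y j)) * star (a j))) :=
  stmt0_general B N D hspan E hECP hEstar hE1 hErange Etil hEtil
end

section
/- Let A be a complex unital *-algebra with a sequence (A_n)_{n≥0} of unital star-subalgebras such that for every n the ordered products a_0a_1⋯a_n with a_j ∈ A_j linearly span A_{n]}, and assume A is the union of the A_{n]}. Let φ be a state on A and suppose that for every n there is a quasi-conditional expectation E_{n]} : A_{n+1]} → A_{n]} with respect to the triplet A_{n-1]} ⊆ A_{n]} ⊆ A_{n+1]} which enjoys the Markov property E_{n]}(A_{[n,n+1]}) ⊆ A_{n-1]}' ∩ A_n and satisfies φ(x) = φ(E_{n]}(x)) for all x ∈ A_{n+1]}. Let φ₀ denote the restriction of φ to A_0. Then for every n and all a_i ∈ A_i (0 ≤ i ≤ n): φ(a_0a_1⋯a_n) = φ₀(E_{0]}(a_0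 E_{1]}(a_1 (⋯ E_{n-1]}(a_{n-1} E_{n]}(a_n)) ⋯)))), and moreover φ₀(E_{0]}(E_{1]}(⋯ E_{n]}(1) ⋯))) = 1. -/
open Matrix
open scoped ComplexOrder

/-- `segAlg sa n` is the subalgebra `A_{n]}` generated by `A_0, …, A_n`. -/
def segAlg {A : Type*} [Ring A] [Algebra ℂ A] [StarRing A] [StarModule ℂ A]
    (sa : ℕ → StarSubalgebra ℂ A) (n : ℕ) : StarSubalgebra ℂ A :=
  ⨆ k : Fin (n + 1), sa k

/-- `prevAlg sa n` is `A_{n-1]}`, with the convention `A_{-1]} = ℂ·1`. -/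
def prevAlg {A : Type*} [Ring A] [Algebra ℂ A] [StarRing A] [StarModule ℂ A]
    (sa : ℕ → StarSubalgebra ℂ A) : ℕ → StarSubalgebra ℂ A
  | 0 => ⊥
  | n + 1 => segAlg sa n

/-- `ecomp E m k = E_m ∘ E_{m+1} ∘ ⋯ ∘ E_{m+k-1}` (the identity when `k = 0`). -/
def ecomp {A : Type*} [Ring A] [Algebra ℂ A] (E : ℕ → A →ₗ[ℂ] A) : ℕ → ℕ → A →ₗ[ℂ] A
  | _, 0 => LinearMap.id
  | m, k + 1 => E m ∘ₗ ecomp E (m + 1) k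

/-- `nest E a k j = E_k(a_k · E_{k+1}(a_{k+1} ⋯ E_{k+j}(a_{k+j}) ⋯ ))`. -/
def nest {A : Type*} [Ring A] [Algebra ℂ A] (E : ℕ → A →ₗ[ℂ] A) (a : ℕ → A) :
    ℕ → ℕ → A
  | k, 0 => E k (a k)
  | k, j + 1 => E k (a k * nest E a (k + 1) j)

/-! Peel off one factor at a time, keeping the already processed prefix `c ∈ A_{k-1]}` on the
left: the induction hypothesis for the prefix `c a_k ∈ A_{k]}`, then `φ = φ ∘ E_k` and the module
property of `E_k` over `A_{k-1]}` give
`φ(c a_k ⋯ a_n) = φ(c a_k E_{k+1}(⋯)) = φ(E_k(c a_k E_{k+1}(⋯))) = φ(c E_k(a_k E_{k+1}(⋯)))`.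
The Markov property `E_k(A_{[k,k+1]}) ⊆ A_k` keeps `a_k E_{k+1}(⋯)` inside `A_{k+1]}`, the domain
on which `E_k` has these properties. -/

theorem List.prod_ofFn_add_succ {M : Type*} [Monoid M] (a : ℕ → M) (k j : ℕ) :
    (List.ofFn fun i : Fin (j + 2) => a (k + i)).prod
      = a k * (List.ofFn fun i : Fin (j + 1) => a (k + 1 + i)).prod := by
  simp only [List.ofFn_succ, List.prod_cons, Fin.val_zero, Fin.val_succ, add_zero,
    add_assoc, add_comm 1]

section MarkovState

variable {A : Type*} [Ring A] [Algebra ℂ A] [StarRing A] [StarModule ℂ A]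
  (sa : ℕ → StarSubalgebra ℂ A)

theorem sa_le_segAlg {k n : ℕ} (h : k ≤ n) : sa k ≤ segAlg sa n :=
  le_iSup_of_le (⟨k, by omega⟩ : Fin (n + 1)) le_rfl

theorem segAlg_mono {m n : ℕ} (h : m ≤ n) : segAlg sa m ≤ segAlg sa n :=
  iSup_le fun i => sa_le_segAlg sa (by omega : (i : ℕ) ≤ n)

theorem prevAlg_le_segAlg (k : ℕ) : prevAlg sa k ≤ segAlg sa k := by
  cases k with
  | zero => exact bot_le
  | succ k => exact segAlg_mono sa k.le_succ

variable {sa} {E : ℕ → A →ₗ[ℂ] A}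

theorem nest_mem (hE : ∀ n, ∀ x ∈ sa n ⊔ sa (n + 1), E n x ∈ sa n) {a : ℕ → A} :
    ∀ (j k : ℕ), (∀ i ≤ k + j, a i ∈ sa i) → nest E a k j ∈ sa k
  | 0, k, ha => hE k _ (SetLike.le_def.mp le_sup_left (ha k (by omega)))
  | j + 1, k, ha =>
    hE k _ (mul_mem (SetLike.le_def.mp le_sup_left (ha k (by omega)))
      (SetLike.le_def.mp le_sup_right
        (nest_mem hE j (k + 1) fun i hi => ha i (by omega))))

theorem ecomp_one_mem (hEmaps : ∀ n, ∀ x ∈ segAlg sa (n + 1), E n x ∈ segAlg sa n) :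
    ∀ (k m : ℕ), ecomp E m k 1 ∈ segAlg sa m
  | 0, _ => one_mem _
  | k + 1, m => hEmaps m _ (ecomp_one_mem hEmaps k (m + 1))

variable {φ : A →ₗ[ℂ] ℂ}

theorem apply_ecomp_one (hEmaps : ∀ n, ∀ x ∈ segAlg sa (n + 1), E n x ∈ segAlg sa n)
    (hinv : ∀ n, ∀ x ∈ segAlg sa (n + 1), φ (E n x) = φ x) :
    ∀ (k m : ℕ), φ (ecomp E m k 1) = φ 1
  | 0, _ => rfl
  | k + 1, m =>
    (hinv m _ (ecomp_one_mem hEmaps k (m + 1))).trans (apply_ecomp_one hEmaps hinv k (m + 1))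

theorem apply_mul_prod_eq_apply_mul_nest
    (hEmod : ∀ n, ∀ c ∈ prevAlg sa n, ∀ x ∈ segAlg sa (n + 1), E n (c * x) = c * E n x)
    (hE : ∀ n, ∀ x ∈ sa n ⊔ sa (n + 1), E n x ∈ sa n)
    (hinv : ∀ n, ∀ x ∈ segAlg sa (n + 1), φ (E n x) = φ x) {a : ℕ → A} :
    ∀ (j k : ℕ) {c : A}, c ∈ prevAlg sa k → (∀ i ≤ k + j, a i ∈ sa i) →
      φ (c * (List.ofFn fun i : Fin (j + 1) => a (k + i)).prod) = φ (c * nest E a k j)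
  | 0, k, c, hc, ha => by
    have hak : a k ∈ segAlg sa (k + 1) := sa_le_segAlg sa k.le_succ (ha k (by omega))
    have hcak : c * a k ∈ segAlg sa (k + 1) :=
      mul_mem (segAlg_mono sa k.le_succ (prevAlg_le_segAlg sa k hc)) hak
    simpa [nest, hEmod k c hc _ hak] using (hinv k _ hcak).symm
  | j + 1, k, c, hc, ha => by
    have hak : a k ∈ sa k := ha k (by omega)
    have hcak : c * a k ∈ prevAlg sa (k + 1) :=
      mul_mem (prevAlg_le_segAlg sa k hc) (sa_le_segAlg sa le_rfl hak)
    have hx : a k * nest E a (k + 1) j ∈ segAlg sa (k + 1) :=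
      mul_mem (sa_le_segAlg sa k.le_succ hak)
        (sa_le_segAlg sa le_rfl (nest_mem hE j (k + 1) fun i hi => ha i (by omega)))
    calc φ (c * (List.ofFn fun i : Fin (j + 2) => a (k + i)).prod)
        = φ (c * a k * (List.ofFn fun i : Fin (j + 1) => a (k + 1 + i)).prod) := by
          rw [List.prod_ofFn_add_succ, mul_assoc]
      _ = φ (c * a k * nest E a (k + 1) j) :=
          apply_mul_prod_eq_apply_mul_nest hEmod hE hinv j (k + 1) hcak
            fun i hi => ha i (by omega)
      _ = φ (E k (c * (a k * nest E a (k + 1) j))) := by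
          rw [hinv k _ (mul_mem (segAlg_mono sa k.le_succ (prevAlg_le_segAlg sa k hc)) hx),
            mul_assoc]
      _ = φ (c * nest E a k (j + 1)) := by rw [hEmod k c hc _ hx, nest]

end MarkovState

theorem stmt2_general {A : Type*} [Ring A] [Algebra ℂ A] [StarRing A] [StarModule ℂ A]
    (sa : ℕ → StarSubalgebra ℂ A)
    -- `φ` is a state on `A`
    (φ : A →ₗ[ℂ] ℂ) (hφ1 : φ 1 = 1)
    -- the Markov quasi-conditional expectations `E_{n]} : A_{n+1]} → A_{n]}`
    (E : ℕ → A →ₗ[ℂ] A)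
    (hEmaps : ∀ n, ∀ x ∈ segAlg sa (n + 1), E n x ∈ segAlg sa n)
    (hEmod : ∀ n, ∀ c ∈ prevAlg sa n, ∀ x ∈ segAlg sa (n + 1), E n (c * x) = c * E n x)
    -- the Markov property `E_{n]}(A_{[n,n+1]}) ⊆ A_{n-1]}' ∩ A_n`
    (hMarkov : ∀ n, ∀ x ∈ sa n ⊔ sa (n + 1),
      (∀ y ∈ prevAlg sa n, E n x * y = y * E n x) ∧ E n x ∈ sa n)
    -- `φ = φ ∘ E_{n]}` on `A_{n+1]}`
    (hinv : ∀ n, ∀ x ∈ segAlg sa (n + 1), φ (E n x) = φ x) :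
    -- conclusion (with `φ₀` the restriction of `φ` to `A_0`):
    (∀ n (a : ℕ → A), (∀ i ≤ n, a i ∈ sa i) →
      φ ((List.ofFn fun i : Fin (n + 1) => a i).prod) = φ (nest E a 0 n))
    ∧ (∀ n, φ (ecomp E 0 (n + 1) 1) = 1) := by
  have hE : ∀ n, ∀ x ∈ sa n ⊔ sa (n + 1), E n x ∈ sa n := fun n x hx => (hMarkov n x hx).2
  refine ⟨fun n a ha => ?_, fun n => ?_⟩
  · simpa using apply_mul_prod_eq_apply_mul_nest hEmod hE hinv n 0 (one_mem (prevAlg sa 0))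
      fun i hi => ha i (by omega)
  · rw [apply_ecomp_one hEmaps hinv, hφ1]

/-- necessity part of the structure theorem for Markov states.
If `φ` is a backward quantum Markov state with associated Markov quasi-conditional
expectations `E_{n]}`, then `φ(a_0 a_1 ⋯ a_n) = φ₀(E_{0]}(a_0 E_{1]}(a_1 ⋯ E_{n]}(a_n)⋯)))`
and `φ₀(E_{0]}(E_{1]}(⋯ E_{n]}(1)⋯))) = 1`. -/
theorem stmt2 {A : Type*} [Ring A] [Algebra ℂ A] [StarRing A] [StarModule ℂ A]
    (sa : ℕ → StarSubalgebra ℂ A)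
    (hgen : ∀ n, ∀ x ∈ segAlg sa n,
      x ∈ Submodule.span ℂ
        {z : A | ∃ a : ℕ → A, (∀ i, a i ∈ sa i) ∧ z = (List.ofFn fun i : Fin (n + 1) => a i).prod})
    (hunion : ∀ x : A, ∃ n, x ∈ segAlg sa n)
    -- `φ` is a state on `A`
    (φ : A →ₗ[ℂ] ℂ) (hφ1 : φ 1 = 1) (hφpos : ∀ x : A, 0 ≤ φ (star x * x))
    -- the Markov quasi-conditional expectations `E_{n]} : A_{n+1]} → A_{n]}`
    (E : ℕ → A →ₗ[ℂ] A)
    (hEmaps : ∀ n, ∀ x ∈ segAlg sa (n + 1), E n x ∈ segAlg sa n)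
    (hEstar : ∀ n, ∀ x ∈ segAlg sa (n + 1), E n (star x) = star (E n x))
    (hECP : ∀ n (k : ℕ) (x : Fin k → A), (∀ i, x i ∈ segAlg sa (n + 1)) →
      MatIsPos (Matrix.of fun i j => E n (star (x i) * x j)))
    (hEmod : ∀ n, ∀ c ∈ prevAlg sa n, ∀ x ∈ segAlg sa (n + 1), E n (c * x) = c * E n x)
    -- the Markov property `E_{n]}(A_{[n,n+1]}) ⊆ A_{n-1]}' ∩ A_n`
    (hMarkov : ∀ n, ∀ x ∈ sa n ⊔ sa (n + 1),
      (∀ y ∈ prevAlg sa n, E n x * y = y * E n x) ∧ E n x ∈ sa n)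
    -- `φ = φ ∘ E_{n]}` on `A_{n+1]}`
    (hinv : ∀ n, ∀ x ∈ segAlg sa (n + 1), φ (E n x) = φ x) :
    -- conclusion (with `φ₀` the restriction of `φ` to `A_0`):
    (∀ n (a : ℕ → A), (∀ i ≤ n, a i ∈ sa i) →
      φ ((List.ofFn fun i : Fin (n + 1) => a i).prod) = φ (nest E a 0 n))
    ∧ (∀ n, φ (ecomp E 0 (n + 1) 1) = 1) :=
  stmt2_general sa φ hφ1 E hEmaps hEmod hMarkov hinv
end

section
/- Let A be a complex unital *-algebra and Θ : A → A a *-algebra automorphism with Θ∘Θ = id. For x ∈ A write x₊ := (x + Θ(x))/2 and x₋ := (x − Θ(x))/2. Let B and C be Θ-invariant unital star-subalgebras of A satisfying the graded commutation relations: for all a ∈ B and b ∈ C, a₊b₊ = b₊a₊, a₊b₋ = b₋a₊, a₋b₊ = b₊a₋, and a₋b₋ = −b₋a₋. Let E : C → A be a linear map with E∘Θ = E on C and whose range commutes elementwise with B. Let Ẽ : B∨C → A be a linear map with Ẽ(ab) = aE(b) for all a ∈ B, b ∈ C. Then Ẽ(ab) = Ẽ(ba) for all a ∈ B and b ∈ C;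 in particular E(b₋) = 0 for every b ∈ C. -/
/-! Decomposing `a = a₊ + a₋` and `b = b₊ + b₋`, the graded commutation relations leave only the
odd–odd terms in the commutator: `ab − ba = a₋b₋ − b₋a₋ = 2 a₋b₋`. Then
`Ẽ(ab) − Ẽ(ba) = 2 a₋ E(b₋)`, and `E(b₋) = (E b − E(Θ b))/2 = 0` because `E` is even. -/

/-- The even part `x₊ = (x + Θ(x))/2` of `x` with respect to an involution `Θ`. -/
noncomputable def evenPart {A : Type*} [Ring A] [Algebra ℂ A] (Θ : A ≃ₐ[ℂ] A) (x : A) : A :=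
  (2 : ℂ)⁻¹ • (x + Θ x)

/-- The odd part `x₋ = (x − Θ(x))/2` of `x` with respect to an involution `Θ`. -/
noncomputable def oddPart {A : Type*} [Ring A] [Algebra ℂ A] (Θ : A ≃ₐ[ℂ] A) (x : A) : A :=
  (2 : ℂ)⁻¹ • (x - Θ x)

section EvenOddParts

variable {A : Type*} [Ring A] [Algebra ℂ A] (Θ : A ≃ₐ[ℂ] A)

theorem evenPart_add_oddPart (x : A) : evenPart Θ x + oddPart Θ x = x := by
  rw [evenPart, oddPart, ← smul_add, add_add_sub_cancel, ← two_smul ℂ, smul_smul,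
    inv_mul_cancel₀ two_ne_zero, one_smul]

theorem oddPart_mem {S : Type*} [SetLike S A] [AddSubgroupClass S A] [SMulMemClass S ℂ A]
    {s : S} {x : A} (hx : x ∈ s) (hΘx : Θ x ∈ s) : oddPart Θ x ∈ s :=
  SMulMemClass.smul_mem _ (sub_mem hx hΘx)

theorem map_oddPart_eq_zero {M : Type*} [AddCommGroup M] [Module ℂ M] (f : A →ₗ[ℂ] M) {x : A}
    (hf : f (Θ x) = f x) : f (oddPart Θ x) = 0 := by
  rw [oddPart, map_smul, map_sub, hf, sub_self, smul_zero]

theorem mul_sub_mul_eq_two_smul_oddPart_mul_oddPart {a b : A}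
    (hee : evenPart Θ a * evenPart Θ b = evenPart Θ b * evenPart Θ a)
    (heo : evenPart Θ a * oddPart Θ b = oddPart Θ b * evenPart Θ a)
    (hoe : oddPart Θ a * evenPart Θ b = evenPart Θ b * oddPart Θ a)
    (hoo : oddPart Θ a * oddPart Θ b = -(oddPart Θ b * oddPart Θ a)) :
    a * b - b * a = (2 : ℂ) • (oddPart Θ a * oddPart Θ b) := by
  have hoo' : oddPart Θ b * oddPart Θ a = -(oddPart Θ a * oddPart Θ b) := by
    rw [hoo, neg_neg]
  calc a * b - b * a
      = (evenPart Θ a + oddPart Θ a) * (evenPart Θ b + oddPart Θ b)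
        - (evenPart Θ b + oddPart Θ b) * (evenPart Θ a + oddPart Θ a) := by
        rw [evenPart_add_oddPart, evenPart_add_oddPart]
    _ = (2 : ℂ) • (oddPart Θ a * oddPart Θ b) := by
        simp only [add_mul, mul_add, ← hee, ← heo, ← hoe, hoo', two_smul]
        abel

end EvenOddParts

theorem stmt6_general {A : Type*} [Ring A] [Algebra ℂ A] [StarRing A] [StarModule ℂ A]
    (Θ : A ≃ₐ[ℂ] A)
    (B C : StarSubalgebra ℂ A)
    (hBinv : ∀ x ∈ B, Θ x ∈ B) (hCinv : ∀ x ∈ C, Θ x ∈ C)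
    -- graded commutation relations between `B` and `C`
    (hgraded : ∀ a ∈ B, ∀ b ∈ C,
      evenPart Θ a * evenPart Θ b = evenPart Θ b * evenPart Θ a
      ∧ evenPart Θ a * oddPart Θ b = oddPart Θ b * evenPart Θ a
      ∧ oddPart Θ a * evenPart Θ b = evenPart Θ b * oddPart Θ a
      ∧ oddPart Θ a * oddPart Θ b = -(oddPart Θ b * oddPart Θ a))
    -- `E : C → A` even, with range commuting elementwise with `B`
    (E : A →ₗ[ℂ] A)
    (hEeven : ∀ b ∈ C, E (Θ b) = E b)
    -- `Ẽ : B ∨ C → A` with `Ẽ(ab) = a E(b)`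
    (Etil : A →ₗ[ℂ] A)
    (hEtil : ∀ a ∈ B, ∀ b ∈ C, Etil (a * b) = a * E b) :
    (∀ a ∈ B, ∀ b ∈ C, Etil (a * b) = Etil (b * a))
    ∧ (∀ b ∈ C, E (oddPart Θ b) = 0) := by
  have hEodd (b : A) (hb : b ∈ C) : E (oddPart Θ b) = 0 :=
    map_oddPart_eq_zero Θ E (hEeven b hb)
  refine ⟨fun a ha b hb => ?_, hEodd⟩
  obtain ⟨hee, heo, hoe, hoo⟩ := hgraded a ha b hb
  rw [← sub_eq_zero, ← map_sub, mul_sub_mul_eq_two_smul_oddPart_mul_oddPart Θ hee heo hoe hoo,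
    map_smul, hEtil _ (oddPart_mem Θ ha (hBinv a ha)) _ (oddPart_mem Θ hb (hCinv b hb)),
    hEodd b hb, mul_zero, smul_zero]

/-- If `E : C → A` is even with range commuting with `B`, and
`Ẽ(ab) = a E(b)` for `a ∈ B`, `b ∈ C`, then `Ẽ` enjoys the trace-like property
`Ẽ(ab) = Ẽ(ba)`; in particular `E` vanishes on odd parts. -/
theorem stmt6 {A : Type*} [Ring A] [Algebra ℂ A] [StarRing A] [StarModule ℂ A]
    (Θ : A ≃ₐ[ℂ] A) (hΘstar : ∀ a, Θ (star a) = star (Θ a)) (hΘinv : ∀ a, Θ (Θ a) = a)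
    (B C : StarSubalgebra ℂ A)
    (hBinv : ∀ x ∈ B, Θ x ∈ B) (hCinv : ∀ x ∈ C, Θ x ∈ C)
    -- graded commutation relations between `B` and `C`
    (hgraded : ∀ a ∈ B, ∀ b ∈ C,
      evenPart Θ a * evenPart Θ b = evenPart Θ b * evenPart Θ a
      ∧ evenPart Θ a * oddPart Θ b = oddPart Θ b * evenPart Θ a
      ∧ oddPart Θ a * evenPart Θ b = evenPart Θ b * oddPart Θ a
      ∧ oddPart Θ a * oddPart Θ b = -(oddPart Θ b * oddPart Θ a))
    -- `E : C → A` even, with range commuting elementwise with `B`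
    (E : A →ₗ[ℂ] A)
    (hEeven : ∀ b ∈ C, E (Θ b) = E b)
    (hEcomm : ∀ b ∈ C, ∀ a ∈ B, E b * a = a * E b)
    -- `Ẽ : B ∨ C → A` with `Ẽ(ab) = a E(b)`
    (Etil : A →ₗ[ℂ] A)
    (hEtil : ∀ a ∈ B, ∀ b ∈ C, Etil (a * b) = a * E b) :
    (∀ a ∈ B, ∀ b ∈ C, Etil (a * b) = Etil (b * a))
    ∧ (∀ b ∈ C, E (oddPart Θ b) = 0) :=
  stmt6_general Θ B C hBinv hCinv hgraded E hEeven Etil hEtil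
end

section
/- Let M and V be complex unital *-algebras and let M ⊗ V denote their algebraic tensor product over ℂ, equipped with the star operation determined by (x ⊗ y)* = x* ⊗ y*. If A = (a_{ij}) ∈ M_n(M) is positive (a finite sum of matrices C*C with C ∈ M_n(M)) and B = (b_{ij}) ∈ M_n(V) is positive (a finite sum of matrices D*D with D ∈ M_n(V)), then the Schur tensor product A∘⊗B := (a_{ij} ⊗ b_{ij}) ∈ M_n(M ⊗ V) is positive, i.e. a finite sum of matrices of the form F*F with F ∈ M_n(M ⊗ V). -/
open Matrix
open scoped TensorProduct

/-!
Both hypotheses and the conclusion are additive cones and `(A, B) ↦ (a_{ij} ⊗ b_{ij})` is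
biadditive, so it suffices to treat `A = C* C` and `B = D* D`. Writing `F_q` for the matrix
whose `r`-th row is the `r`-th row of `C` tensored entrywise with the `q`-th row of `D`, the
entry `(i, j)` of `Σ_q F_q* F_q` is
`Σ_{q,r} (c_{ri}* c_{rj}) ⊗ (d_{qi}* d_{qj}) = (C* C)_{ij} ⊗ (D* D)_{ij}`.
-/

theorem LinearMap.map₂_mem_of_mem_closure {R P Q S : Type*} [CommSemiring R]
    [AddCommMonoid P] [AddCommMonoid Q] [AddCommMonoid S] [Module R P] [Module R Q] [Module R S]
    (f : P →ₗ[R] Q →ₗ[R] S) {s : Set P} {t : Set Q} {T : AddSubmonoid S}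
    (h : ∀ a ∈ s, ∀ b ∈ t, f a b ∈ T) {a : P} {b : Q}
    (ha : a ∈ AddSubmonoid.closure s) (hb : b ∈ AddSubmonoid.closure t) : f a b ∈ T := by
  have hs : ∀ b ∈ t, AddSubmonoid.closure s ≤ T.comap (f.flip b).toAddMonoidHom := fun b hb =>
    AddSubmonoid.closure_le.2 fun a ha => h a ha b hb
  exact AddSubmonoid.closure_le (S := T.comap (f a).toAddMonoidHom).2 (fun b hb' => hs b hb' ha) hb

section SchurTensor

variable {R M V : Type*} [CommSemiring R] [Semiring M] [Algebra R M] [Semiring V] [Algebra R V]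
  {m n : Type*}

variable (R) in
def Matrix.schurTensor : Matrix m n M →ₗ[R] Matrix m n V →ₗ[R] Matrix m n (M ⊗[R] V) :=
  LinearMap.mk₂ R (fun A B => of fun i j => A i j ⊗ₜ[R] B i j)
    (fun _ _ _ => by ext; simp [TensorProduct.add_tmul])
    (fun _ _ _ => by ext; simp [TensorProduct.smul_tmul'])
    (fun _ _ _ => by ext; simp [TensorProduct.tmul_add])
    (fun _ _ _ => by ext; simp [TensorProduct.tmul_smul])

@[simp]
theorem Matrix.schurTensor_apply (A : Matrix m n M) (B : Matrix m n V) (i : m) (j : n) :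
    schurTensor R A B i j = A i j ⊗ₜ[R] B i j :=
  rfl

variable [Star M] [Star V] {k l : Type*} [Fintype k] [Fintype l]
  (sstar : M ⊗[R] V →+ M ⊗[R] V)
  (hsstar : ∀ (x : M) (y : V), sstar (x ⊗ₜ y) = star x ⊗ₜ star y)
include hsstar

theorem Matrix.schurTensor_conjTranspose_mul_self (C : Matrix k n M) (D : Matrix l n V) :
    schurTensor R (Cᴴ * C) (Dᴴ * D) =
      ∑ q : l,
        (of fun i j => sstar (C j i ⊗ₜ[R] D q i)) * of fun r j => C r j ⊗ₜ[R] D q j := by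
  ext i j
  simp only [schurTensor_apply, mul_apply, conjTranspose_apply, sum_apply, of_apply, hsstar,
    Algebra.TensorProduct.tmul_mul_tmul, TensorProduct.sum_tmul, TensorProduct.tmul_sum]

theorem Matrix.schurTensor_conjTranspose_mul_self_mem [Fintype n]
    (C : Matrix n n M) (D : Matrix n n V) :
    schurTensor R (Cᴴ * C) (Dᴴ * D) ∈ AddSubmonoid.closure
      {Y : Matrix n n (M ⊗[R] V) |
        ∃ F : Matrix n n (M ⊗[R] V), Y = (of fun i j => sstar (F j i)) * F} := by
  rw [schurTensor_conjTranspose_mul_self sstar hsstar]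
  exact sum_mem fun q _ =>
    AddSubmonoid.subset_closure ⟨of fun r j => C r j ⊗ₜ[R] D q j, rfl⟩

end SchurTensor

theorem stmt8_general {M V : Type*}
    [Ring M] [Algebra ℂ M] [StarRing M]
    [Ring V] [Algebra ℂ V] [StarRing V]
    (sstar : M ⊗[ℂ] V →+ M ⊗[ℂ] V)
    (hsstar : ∀ (x : M) (y : V), sstar (x ⊗ₜ[ℂ] y) = star x ⊗ₜ[ℂ] star y)
    (n : ℕ) (A : Matrix (Fin n) (Fin n) M) (B : Matrix (Fin n) (Fin n) V)
    (hA : A ∈ AddSubmonoid.closure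
      {Y : Matrix (Fin n) (Fin n) M | ∃ C : Matrix (Fin n) (Fin n) M, Y = Cᴴ * C})
    (hB : B ∈ AddSubmonoid.closure
      {Y : Matrix (Fin n) (Fin n) V | ∃ D : Matrix (Fin n) (Fin n) V, Y = Dᴴ * D}) :
    (Matrix.of fun i j => A i j ⊗ₜ[ℂ] B i j) ∈ AddSubmonoid.closure
      {Y : Matrix (Fin n) (Fin n) (M ⊗[ℂ] V) |
        ∃ F : Matrix (Fin n) (Fin n) (M ⊗[ℂ] V),
          Y = (Matrix.of fun i j => sstar (F j i)) * F} := by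
  refine LinearMap.map₂_mem_of_mem_closure (schurTensor ℂ) ?_ hA hB
  rintro _ ⟨C, rfl⟩ _ ⟨D, rfl⟩
  exact schurTensor_conjTranspose_mul_self_mem sstar hsstar C D

/-- Schur tensor product lemma.  Let `sstar` be the star operation on the
algebraic tensor product `M ⊗[ℂ] V`, i.e. the additive map determined by
`sstar (x ⊗ₜ y) = star x ⊗ₜ star y`.  If `A ∈ Mₙ(M)` and `B ∈ Mₙ(V)` are positive (finite
sums of matrices of the form `C* C`), then their Schur tensor product
`A ∘⊗ B = (a_{ij} ⊗ b_{ij})` is positive in `Mₙ(M ⊗ V)`. -/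
theorem stmt8 {M V : Type*}
    [Ring M] [Algebra ℂ M] [StarRing M] [StarModule ℂ M]
    [Ring V] [Algebra ℂ V] [StarRing V] [StarModule ℂ V]
    (sstar : M ⊗[ℂ] V →+ M ⊗[ℂ] V)
    (hsstar : ∀ (x : M) (y : V), sstar (x ⊗ₜ[ℂ] y) = star x ⊗ₜ[ℂ] star y)
    (n : ℕ) (A : Matrix (Fin n) (Fin n) M) (B : Matrix (Fin n) (Fin n) V)
    (hA : A ∈ AddSubmonoid.closure
      {Y : Matrix (Fin n) (Fin n) M | ∃ C : Matrix (Fin n) (Fin n) M, Y = Cᴴ * C})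
    (hB : B ∈ AddSubmonoid.closure
      {Y : Matrix (Fin n) (Fin n) V | ∃ D : Matrix (Fin n) (Fin n) V, Y = Dᴴ * D}) :
    (Matrix.of fun i j => A i j ⊗ₜ[ℂ] B i j) ∈ AddSubmonoid.closure
      {Y : Matrix (Fin n) (Fin n) (M ⊗[ℂ] V) |
        ∃ F : Matrix (Fin n) (Fin n) (M ⊗[ℂ] V),
          Y = (Matrix.of fun i j => sstar (F j i)) * F} :=
  stmt8_general sstar hsstar n A B hA hB
end

section
/- Let A be a complex unital *-algebra, B and C unital star-subalgebras of A such that the products {bc : b ∈ B, c ∈ C} linearly span B∨C. Let E : C → A be a linear map with E(c*) = E(c)* for all c ∈ C and whose range commutes elementwise with B, and let Ẽ : B∨C → A be a linear map satisfying Ẽ(bc) = bE(c) for all b ∈ B, c ∈ C. Then Ẽ is a *-map (Ẽ(x*) = Ẽ(x)* for all x ∈ B∨C) if and only if Ẽ(bc) = Ẽ(cb) for all b ∈ B, c ∈ C. -/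
/-!
For `b ∈ B`, `c ∈ C` one computes
`Ẽ(bc)* = (b E(c))* = E(c)* b* = E(c*) b* = b* E(c*) = Ẽ(b* c*)`,
using that `E` preserves `*` and that its range commutes with `B`. Hence `Ẽ(x*) = Ẽ(x)*` for
`x = bc` says `Ẽ(c* b*) = Ẽ(b* c*)`, which is the trace property for `b*, c*`; and since
`Ẽ` is linear and the products `bc` span `B ∨ C`, the `*`-map property on products extends to
all of `B ∨ C`.
-/

theorem LinearMap.map_star_of_mem_span {R M N : Type*} [CommSemiring R] [StarRing R]
    [AddCommMonoid M] [StarAddMonoid M] [Module R M] [StarModule R M]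
    [AddCommMonoid N] [StarAddMonoid N] [Module R N] [StarModule R N]
    (f : M →ₗ[R] N) {s : Set M} (hs : ∀ x ∈ s, f (star x) = star (f x))
    {x : M} (hx : x ∈ Submodule.span R s) : f (star x) = star (f x) := by
  induction hx using Submodule.span_induction with
  | mem x hx => exact hs x hx
  | zero => simp
  | add x y _ _ hx hy => rw [star_add, map_add, map_add, hx, hy, star_add]
  | smul r x _ hx => rw [star_smul, map_smul, map_smul, hx, star_smul]

theorem star_apply_mul_eq_apply_star_mul_star {R A : Type*} [CommSemiring R] [StarRing R]
    [Semiring A] [StarRing A] [Algebra R A] [StarModule R A] {B C : StarSubalgebra R A}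
    {E Etil : A → A}
    (hEstar : ∀ c ∈ C, E (star c) = star (E c))
    (hEcomm : ∀ c ∈ C, ∀ b ∈ B, E c * b = b * E c)
    (hEtil : ∀ b ∈ B, ∀ c ∈ C, Etil (b * c) = b * E c)
    ⦃b c : A⦄ (hb : b ∈ B) (hc : c ∈ C) :
    star (Etil (b * c)) = Etil (star b * star c) := by
  rw [hEtil b hb c hc, star_mul, ← hEstar c hc, hEcomm _ (star_mem hc) _ (star_mem hb),
    hEtil _ (star_mem hb) _ (star_mem hc)]

/-- With `Ẽ(bc) = b E(c)` for `b ∈ B`, `c ∈ C`, where `E` is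
star-preserving with range commuting with `B`, the map `Ẽ` is a `*`-map on `B ∨ C` if and
only if it enjoys the trace-like property `Ẽ(bc) = Ẽ(cb)`. -/
theorem stmt12 {A : Type*} [Ring A] [Algebra ℂ A] [StarRing A] [StarModule ℂ A]
    (B C : StarSubalgebra ℂ A)
    (hspan : ∀ x ∈ B ⊔ C,
      x ∈ Submodule.span ℂ {z : A | ∃ b ∈ B, ∃ c ∈ C, z = b * c})
    (E : A →ₗ[ℂ] A)
    (hEstar : ∀ c ∈ C, E (star c) = star (E c))
    (hEcomm : ∀ c ∈ C, ∀ b ∈ B, E c * b = b * E c)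
    (Etil : A →ₗ[ℂ] A)
    (hEtil : ∀ b ∈ B, ∀ c ∈ C, Etil (b * c) = b * E c) :
    (∀ x ∈ B ⊔ C, Etil (star x) = star (Etil x))
      ↔ (∀ b ∈ B, ∀ c ∈ C, Etil (b * c) = Etil (c * b)) := by
  have key := star_apply_mul_eq_apply_star_mul_star hEstar hEcomm hEtil
  constructor
  · intro hstar b hb c hc
    have hmem : star b * star c ∈ B ⊔ C :=
      mul_mem (le_sup_left (a := B) (star_mem hb)) (le_sup_right (a := B) (star_mem hc))
    calc Etil (b * c) = star (Etil (star b * star c)) := by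
          rw [key (star_mem hb) (star_mem hc), star_star, star_star]
      _ = Etil (star (star b * star c)) := (hstar _ hmem).symm
      _ = Etil (c * b) := by rw [star_mul, star_star, star_star]
  · intro htrace x hx
    refine Etil.map_star_of_mem_span ?_ (hspan x hx)
    rintro _ ⟨b, hb, c, hc, rfl⟩
    rw [star_mul, ← htrace _ (star_mem hb) _ (star_mem hc), key hb hc]
end
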